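/- Let a1, a2, a3 be pairwise distinct positive reals with a1 + a2 + a3 = 1/2. Then the positive solutions (x1, x2, x3) of system (S) are exactly the triples of the form ((1-2*a1)*q, (1-2*a2)*q, 2*(a1+a2)*q), ((1-2*a1)*q, (1-2*a2)*q, 2*(1-a1-a2)*q), ((1-2*a1)*q, (1+2*a2)*q, 2*(a1+a2)*q), or ((1+2*a1)*q, (1-2*a2)*q, 2*(a1+a2)*q) with q > 0. -/

import Mathlib

/-!
Both equations of (S) are homogeneous quadrics, so their zero sets are two conics in the
projective plane, meeting in the four points
`A = (1-2a₁, 1-2a₂, 1-2a₃)`, `B = (1-2a₁, 1-2a₂, 1+2a₃)`,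
`C = (1-2a₁, 1+2a₂, 1-2a₃)`, `D = (1+2a₁, 1-2a₂, 1-2a₃)`.
Hence the pencil they span contains the line pairs `AB ∪ CD` and `AC ∪ BD`, and when
`a₁ + a₂ + a₃ = 1/2` these are explicit combinations of the two equations (the ones without an
`x₃²`, resp. an `x₂²` term). A solution lies on one line of each pair, hence is one of the four
points up to scale, and the scale is positive when `x₁ > 0`.
-/

noncomputable section
open Real Set

/-- First equation of system (S). -/
def eqS1 (a1 a2 a3 x1 x2 x3 : ℝ) : Prop :=
  (a2 + a3)*(a1*x2^2 + a1*x3^2 - x2*x3) + (a2*x2 + a3*x3)*x1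
    - (a1*a2 + a1*a3 + 2*a2*a3)*x1^2 = 0

/-- Second equation of system (S). -/
def eqS2 (a1 a2 a3 x1 x2 x3 : ℝ) : Prop :=
  (a1 + a3)*(a2*x1^2 + a2*x3^2 - x1*x3) + (a1*x1 + a3*x3)*x2
    - (a1*a2 + 2*a1*a3 + a2*a3)*x2^2 = 0

section SumHalf

variable {a1 a2 a3 x1 x2 x3 : ℝ}

theorem lineAB_mul_lineCD_eq_zero (hsum : a1 + a2 + a3 = 1/2)
    (hσ : a1*a2 + a1*a3 + a2*a3 ≠ 0)
    (e1 : eqS1 a1 a2 a3 x1 x2 x3) (e2 : eqS2 a1 a2 a3 x1 x2 x3) :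
    ((1 - 2*a2)*x1 - (1 - 2*a1)*x2) * (2*a2*x1 + 2*a1*x2 - x3) = 0 := by
  refine (mul_eq_zero.1 ?_).resolve_left hσ
  obtain rfl : a3 = 1/2 - a1 - a2 := by linarith
  unfold eqS1 at e1
  unfold eqS2 at e2
  linear_combination (-2*a2*(a1 + (1/2 - a1 - a2))) * e1 + (2*a1*(a2 + (1/2 - a1 - a2))) * e2

theorem lineAC_mul_lineBD_eq_zero (hsum : a1 + a2 + a3 = 1/2)
    (hσ : a1*a2 + a1*a3 + a2*a3 ≠ 0)
    (e1 : eqS1 a1 a2 a3 x1 x2 x3) (e2 : eqS2 a1 a2 a3 x1 x2 x3) :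
    ((1 - 2*a3)*x1 - (1 - 2*a1)*x3) * (x2 - 2*a3*x1 - 2*a1*x3) = 0 := by
  refine (mul_eq_zero.1 ?_).resolve_left hσ
  obtain rfl : a3 = 1/2 - a1 - a2 := by linarith
  unfold eqS1 at e1
  unfold eqS2 at e2
  linear_combination (2*(a1*a2 + 2*a1*(1/2 - a1 - a2) + a2*(1/2 - a1 - a2))) * e1 +
    (2*a1*(a2 + (1/2 - a1 - a2))) * e2

theorem exists_pos_eq_mul_of_proportional {p1 p2 p3 : ℝ} (hp1 : 0 < p1) (hx1 : 0 < x1)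
    (h2 : x2 * p1 = p2 * x1) (h3 : x3 * p1 = p3 * x1) :
    ∃ q : ℝ, 0 < q ∧ x1 = p1*q ∧ x2 = p2*q ∧ x3 = p3*q := by
  refine ⟨x1 / p1, div_pos hx1 hp1, ?_, ?_, ?_⟩ <;> field_simp
  · exact h2
  · exact h3

theorem exists_eq_pointA (hsum : a1 + a2 + a3 = 1/2) (ha1 : 2*a1 < 1) (hx1 : 0 < x1)
    (hAB : (1 - 2*a2)*x1 - (1 - 2*a1)*x2 = 0) (hAC : (1 - 2*a3)*x1 - (1 - 2*a1)*x3 = 0) :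
    ∃ q : ℝ, 0 < q ∧ x1 = (1 - 2*a1)*q ∧ x2 = (1 - 2*a2)*q ∧ x3 = 2*(a1 + a2)*q :=
  exists_pos_eq_mul_of_proportional (by linarith) hx1 (by linear_combination -hAB)
    (by linear_combination -hAC - 2*x1*hsum)

theorem exists_eq_pointB (hsum : a1 + a2 + a3 = 1/2) (ha1 : 0 < a1) (ha1' : 2*a1 < 1)
    (hx1 : 0 < x1) (hAB : (1 - 2*a2)*x1 - (1 - 2*a1)*x2 = 0)
    (hBD : x2 - 2*a3*x1 - 2*a1*x3 = 0) :
    ∃ q : ℝ, 0 < q ∧ x1 = (1 - 2*a1)*q ∧ x2 = (1 - 2*a2)*q ∧ x3 = 2*(1 - a1 - a2)*q := by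
  refine exists_pos_eq_mul_of_proportional (by linarith) hx1 (by linear_combination -hAB) ?_
  refine mul_left_cancel₀ (a := 2*a1) (by positivity) ?_
  linear_combination -hAB - (1 - 2*a1)*hBD - 2*(1 - 2*a1)*x1*hsum

theorem exists_eq_pointC (hsum : a1 + a2 + a3 = 1/2) (ha1 : 0 < a1) (ha1' : 2*a1 < 1)
    (hx1 : 0 < x1) (hCD : 2*a2*x1 + 2*a1*x2 - x3 = 0)
    (hAC : (1 - 2*a3)*x1 - (1 - 2*a1)*x3 = 0) :
    ∃ q : ℝ, 0 < q ∧ x1 = (1 - 2*a1)*q ∧ x2 = (1 + 2*a2)*q ∧ x3 = 2*(a1 + a2)*q := by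
  have hx3 : x3 * (1 - 2*a1) = 2*(a1 + a2) * x1 := by linear_combination -hAC - 2*x1*hsum
  refine exists_pos_eq_mul_of_proportional (by linarith) hx1 ?_ hx3
  refine mul_left_cancel₀ (a := 2*a1) (by positivity) ?_
  linear_combination hx3 + (1 - 2*a1)*hCD

theorem exists_eq_pointD (hsum : a1 + a2 + a3 = 1/2) (ha1 : 0 < a1) (ha1' : 2*a1 < 1)
    (hx1 : 0 < x1) (hCD : 2*a2*x1 + 2*a1*x2 - x3 = 0)
    (hBD : x2 - 2*a3*x1 - 2*a1*x3 = 0) :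
    ∃ q : ℝ, 0 < q ∧ x1 = (1 + 2*a1)*q ∧ x2 = (1 - 2*a2)*q ∧ x3 = 2*(a1 + a2)*q := by
  have hx2 : x2 * (1 + 2*a1) = (1 - 2*a2) * x1 := by
    refine mul_left_cancel₀ (sub_pos.2 ha1').ne' ?_
    linear_combination hBD - 2*a1*hCD + 2*x1*hsum
  refine exists_pos_eq_mul_of_proportional (by linarith) hx1 hx2 ?_
  linear_combination 2*a1*hx2 - (1 + 2*a1)*hCD

theorem eqS1_eqS2_of_eq_points (q : ℝ) (hsum : a1 + a2 + a3 = 1/2)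
    (hx : (x1 = (1 - 2*a1)*q ∧ x2 = (1 - 2*a2)*q ∧ x3 = 2*(a1 + a2)*q) ∨
      (x1 = (1 - 2*a1)*q ∧ x2 = (1 - 2*a2)*q ∧ x3 = 2*(1 - a1 - a2)*q) ∨
      (x1 = (1 - 2*a1)*q ∧ x2 = (1 + 2*a2)*q ∧ x3 = 2*(a1 + a2)*q) ∨
      (x1 = (1 + 2*a1)*q ∧ x2 = (1 - 2*a2)*q ∧ x3 = 2*(a1 + a2)*q)) :
    eqS1 a1 a2 a3 x1 x2 x3 ∧ eqS2 a1 a2 a3 x1 x2 x3 := by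
  obtain rfl : a3 = 1/2 - a1 - a2 := by linarith
  unfold eqS1 eqS2
  rcases hx with ⟨rfl, rfl, rfl⟩ | ⟨rfl, rfl, rfl⟩ | ⟨rfl, rfl, rfl⟩ | ⟨rfl, rfl, rfl⟩ <;>
    constructor <;> ring

end SumHalf

theorem sum_half_distinct_solutions_general (a1 a2 a3 : ℝ)
    (h1 : 0 < a1) (h2 : 0 < a2) (h3 : 0 < a3)
    (hsum : a1 + a2 + a3 = 1/2)
    (x1 x2 x3 : ℝ) (hx1 : 0 < x1) :
    (eqS1 a1 a2 a3 x1 x2 x3 ∧ eqS2 a1 a2 a3 x1 x2 x3) ↔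
      ∃ q : ℝ, 0 < q ∧
        ((x1 = (1 - 2*a1)*q ∧ x2 = (1 - 2*a2)*q ∧ x3 = 2*(a1 + a2)*q) ∨
         (x1 = (1 - 2*a1)*q ∧ x2 = (1 - 2*a2)*q ∧ x3 = 2*(1 - a1 - a2)*q) ∨
         (x1 = (1 - 2*a1)*q ∧ x2 = (1 + 2*a2)*q ∧ x3 = 2*(a1 + a2)*q) ∨
         (x1 = (1 + 2*a1)*q ∧ x2 = (1 - 2*a2)*q ∧ x3 = 2*(a1 + a2)*q)) := by
  refine ⟨fun ⟨e1, e2⟩ => ?_, fun ⟨q, _, hx⟩ => eqS1_eqS2_of_eq_points q hsum hx⟩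
  have hσ : a1*a2 + a1*a3 + a2*a3 ≠ 0 := by positivity
  have ha1 : 2*a1 < 1 := by linarith
  rcases mul_eq_zero.1 (lineAB_mul_lineCD_eq_zero hsum hσ e1 e2) with hAB | hCD <;>
    rcases mul_eq_zero.1 (lineAC_mul_lineBD_eq_zero hsum hσ e1 e2) with hAC | hBD
  · obtain ⟨q, hq, hx⟩ := exists_eq_pointA hsum ha1 hx1 hAB hAC
    exact ⟨q, hq, Or.inl hx⟩
  · obtain ⟨q, hq, hx⟩ := exists_eq_pointB hsum h1 ha1 hx1 hAB hBD
    exact ⟨q, hq, Or.inr <| Or.inl hx⟩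
  · obtain ⟨q, hq, hx⟩ := exists_eq_pointC hsum h1 ha1 hx1 hCD hAC
    exact ⟨q, hq, Or.inr <| Or.inr <| Or.inl hx⟩
  · obtain ⟨q, hq, hx⟩ := exists_eq_pointD hsum h1 ha1 hx1 hCD hBD
    exact ⟨q, hq, Or.inr <| Or.inr <| Or.inr hx⟩

theorem sum_half_distinct_solutions (a1 a2 a3 : ℝ)
    (h1 : 0 < a1) (h2 : 0 < a2) (h3 : 0 < a3)
    (h12 : a1 ≠ a2) (h13 : a1 ≠ a3) (h23 : a2 ≠ a3)
    (hsum : a1 + a2 + a3 = 1/2)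
    (x1 x2 x3 : ℝ) (hx1 : 0 < x1) (hx2 : 0 < x2) (hx3 : 0 < x3) :
    (eqS1 a1 a2 a3 x1 x2 x3 ∧ eqS2 a1 a2 a3 x1 x2 x3) ↔
      ∃ q : ℝ, 0 < q ∧
        ((x1 = (1 - 2*a1)*q ∧ x2 = (1 - 2*a2)*q ∧ x3 = 2*(a1 + a2)*q) ∨
         (x1 = (1 - 2*a1)*q ∧ x2 = (1 - 2*a2)*q ∧ x3 = 2*(1 - a1 - a2)*q) ∨
         (x1 = (1 - 2*a1)*q ∧ x2 = (1 + 2*a2)*q ∧ x3 = 2*(a1 + a2)*q) ∨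
         (x1 = (1 + 2*a1)*q ∧ x2 = (1 - 2*a2)*q ∧ x3 = 2*(a1 + a2)*q)) :=
  sum_half_distinct_solutions_general a1 a2 a3 h1 h2 h3 hsum x1 x2 x3 hx1
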